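/- Let p ∈ (0,1), |ψ⟩ = √p|0⟩ + √(1−p)|1⟩, ρ₀ = |ψ⟩⟨ψ|, ρ₁ = ½I, Δ = |2p−1|, and β_n(ε) = inf{ Tr(Z[ρ₁^{⊗n}] E) : 0 ≤ E ≤ I, Tr(Z[ρ₀^{⊗n}] E) ≥ 1−ε }. Then: (a) for ε ∈ [1/2, 1) and all n ≥ 1, β_n(ε) = (1−ε) / ((1+Δ^n) 2^{n−1}); (b) for ε ∈ (0, 1/2) and all n large enough that Δ^n < 1−2ε, β_n(ε) = (1 − Δ^n − ε) / ((1−Δ^n) 2^{n−1}). -/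

import Mathlib

open Matrix Complex Set Filter

noncomputable section

/-- Number of 1s in a bit string. -/
def ones {n : ℕ} (x : Fin n → Fin 2) : ℕ := (Finset.univ.filter fun i => x i = 1).card

/-- The `n`-fold tensor power of a one-qubit operator, as a matrix indexed by bit strings. -/
def mpow (n : ℕ) (ρ : Matrix (Fin 2) (Fin 2) ℂ) :
    Matrix (Fin n → Fin 2) (Fin n → Fin 2) ℂ :=
  Matrix.of fun x y => ∏ i, ρ (x i) (y i)

/-- The parity operator ω = σ_z^{⊗n}: it multiplies a computational basis vector by
(-1)^(number of 1s). -/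
def parityOp (n : ℕ) : Matrix (Fin n → Fin 2) (Fin n → Fin 2) ℂ :=
  Matrix.diagonal fun x => (-1 : ℂ) ^ ones x

/-- The ℤ₂-twirling Z[X] = ½ (X + ωXω). -/
def twirl {n : ℕ} (X : Matrix (Fin n → Fin 2) (Fin n → Fin 2) ℂ) :
    Matrix (Fin n → Fin 2) (Fin n → Fin 2) ℂ :=
  (2 : ℂ)⁻¹ • (X + parityOp n * X * parityOp n)

/-- Rank-one projection |ψ⟩⟨ψ| on one qubit. -/
def projv (ψ : Fin 2 → ℂ) : Matrix (Fin 2) (Fin 2) ℂ := vecMulVec ψ (star ψ)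

/-- Rank-one projection |ψ⟩⟨ψ| on n qubits. -/
def projN {n : ℕ} (ψ : (Fin n → Fin 2) → ℂ) :
    Matrix (Fin n → Fin 2) (Fin n → Fin 2) ℂ := vecMulVec ψ (star ψ)

def ket0 : Fin 2 → ℂ := ![1, 0]

def ket1 : Fin 2 → ℂ := ![0, 1]

/-- The qubit state √p |0⟩ + e^{iφ} √(1-p) |1⟩. -/
def qubit (p φ : ℝ) : Fin 2 → ℂ :=
  ![(Real.sqrt p : ℂ), Complex.exp (Complex.I * φ) * (Real.sqrt (1 - p) : ℂ)]

/-- The qubit state √p |0⟩ + √(1-p) |1⟩. -/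
def qubitR (p : ℝ) : Fin 2 → ℂ := ![(Real.sqrt p : ℂ), (Real.sqrt (1 - p) : ℂ)]

open scoped ComplexOrder

/-- The set of type-II error probabilities Tr(σ₁ E) over POVM elements 0 ≤ E ≤ I
(Loewner order) whose type-I error is at most ε, i.e. Tr(σ₀ E) ≥ 1-ε. -/
def errSet (n : ℕ) (σ0 σ1 : Matrix (Fin n → Fin 2) (Fin n → Fin 2) ℂ) (ε : ℝ) : Set ℝ :=
  { x | ∃ E : Matrix (Fin n → Fin 2) (Fin n → Fin 2) ℂ,
      E.IsHermitian ∧ E.PosSemidef ∧ (1 - E).PosSemidef ∧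
      1 - ε ≤ ((σ0 * E).trace).re ∧ x = ((σ1 * E).trace).re }

/-- The maximally mixed qubit state ½ I. -/
def mmix : Matrix (Fin 2) (Fin 2) ℂ := (2 : ℂ)⁻¹ • 1

/-!
With `u = ψ^{⊗n}` and `v = ω u = (σ_z ψ)^{⊗n}`, the twirled null hypothesis is
`½ (|u⟩⟨u| + |v⟩⟨v|)`, where `u, v` are unit vectors with real overlap `r = (2p-1)^n`.
It has eigenvalues `λ₁ = (1 + |r|)/2 ≥ λ₂ = (1 - |r|)/2` on the normalised `u ± sgn(r) v`,
and it vanishes on their orthogonal complement. The twirled alternative is `2^{-n} I`.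
Let `0 ≤ E ≤ I` and let `t₁, t₂ ∈ [0, 1]` be its diagonal entries on the two eigenvectors.
The type-I constraint reads `λ₁ t₁ + λ₂ t₂ ≥ 1 - ε`, and `Tr E ≥ t₁ + t₂`, with equality when
`E = t₁ P₁ + t₂ P₂` for the two eigenprojections `P₁, P₂`. So `β_n(ε) = 2^{-n} min (t₁ + t₂)`
is a two-variable linear program, solved by filling the larger eigenvalue first: partially if
`1 - ε ≤ λ₁` (case (a)); otherwise completely, with the remainder put on `λ₂` (case (b)).
-/

section OrthonormalPair

variable {ι : Type*} [Fintype ι]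

structure IsOrthonormalPair (w₁ w₂ : ι → ℂ) : Prop where
  dotProduct_fst : star w₁ ⬝ᵥ w₁ = 1
  dotProduct_snd : star w₂ ⬝ᵥ w₂ = 1
  dotProduct_fst_snd : star w₁ ⬝ᵥ w₂ = 0

lemma IsOrthonormalPair.dotProduct_snd_fst {w₁ w₂ : ι → ℂ} (h : IsOrthonormalPair w₁ w₂) :
    star w₂ ⬝ᵥ w₁ = 0 := by
  rw [star_dotProduct, h.dotProduct_fst_snd, star_zero]

lemma IsOrthonormalPair.symm {w₁ w₂ : ι → ℂ} (h : IsOrthonormalPair w₁ w₂) :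
    IsOrthonormalPair w₂ w₁ :=
  ⟨h.dotProduct_snd, h.dotProduct_fst, h.dotProduct_snd_fst⟩

lemma trace_vecMulVec_star_mul (w : ι → ℂ) (E : Matrix ι ι ℂ) :
    (vecMulVec w (star w) * E).trace = star w ⬝ᵥ (E *ᵥ w) := by
  rw [vecMulVec_mul, trace_vecMulVec, dotProduct_comm, dotProduct_mulVec]

lemma trace_smul_vecMulVec_add_smul_vecMulVec_mul (a b : ℂ) (w₁ w₂ : ι → ℂ) (E : Matrix ι ι ℂ) :
    ((a • vecMulVec w₁ (star w₁) + b • vecMulVec w₂ (star w₂)) * E).trace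
      = a * (star w₁ ⬝ᵥ (E *ᵥ w₁)) + b * (star w₂ ⬝ᵥ (E *ᵥ w₂)) := by
  simp only [Matrix.add_mul, Matrix.smul_mul, trace_add, trace_smul, trace_vecMulVec_star_mul,
    smul_eq_mul]

lemma vecMulVec_star_ofReal_smul (c : ℝ) (w : ι → ℂ) :
    vecMulVec ((c : ℂ) • w) (star ((c : ℂ) • w)) = ((c ^ 2 : ℝ) : ℂ) • vecMulVec w (star w) := by
  rw [star_smul, smul_vecMulVec, vecMulVec_smul, smul_smul, Complex.star_def, Complex.conj_ofReal]
  push_cast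
  ring_nf

lemma star_ofReal_smul_dotProduct_ofReal_smul (a b : ℝ) (x y : ι → ℂ) :
    star ((a : ℂ) • x) ⬝ᵥ ((b : ℂ) • y) = ((a * b : ℝ) : ℂ) * (star x ⬝ᵥ y) := by
  rw [star_smul, smul_dotProduct, dotProduct_smul, Complex.star_def, Complex.conj_ofReal]
  simp only [smul_eq_mul]
  push_cast
  ring

section DecidableEq

variable [DecidableEq ι]

lemma re_dotProduct_mulVec_le_one {E : Matrix ι ι ℂ} (hE : (1 - E).PosSemidef) {w : ι → ℂ}
    (hw : star w ⬝ᵥ w = 1) : (star w ⬝ᵥ (E *ᵥ w)).re ≤ 1 := by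
  have := hE.re_dotProduct_nonneg w
  rw [sub_mulVec, one_mulVec, dotProduct_sub, hw] at this
  simpa using this

lemma isHermitian_one_sub_vecMulVec_sub_vecMulVec (w₁ w₂ : ι → ℂ) :
    (1 - vecMulVec w₁ (star w₁) - vecMulVec w₂ (star w₂)).IsHermitian :=
  (isHermitian_one.sub (posSemidef_vecMulVec_self_star w₁).isHermitian).sub
    (posSemidef_vecMulVec_self_star w₂).isHermitian

end DecidableEq

namespace IsOrthonormalPair

variable {w₁ w₂ : ι → ℂ}

lemma vecMulVec_mul_vecMulVec_snd (h : IsOrthonormalPair w₁ w₂) :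
    vecMulVec w₁ (star w₁) * vecMulVec w₂ (star w₂) = 0 := by
  rw [vecMulVec_mul_vecMulVec, h.dotProduct_fst_snd, zero_smul, vecMulVec_zero]

lemma isIdempotentElem_vecMulVec_fst (h : IsOrthonormalPair w₁ w₂) :
    IsIdempotentElem (vecMulVec w₁ (star w₁)) := by
  rw [IsIdempotentElem, vecMulVec_mul_vecMulVec, h.dotProduct_fst, one_smul]

lemma dotProduct_smul_add_smul_mulVec_fst (h : IsOrthonormalPair w₁ w₂) (c₁ c₂ : ℂ) :
    star w₁ ⬝ᵥ ((c₁ • vecMulVec w₁ (star w₁) + c₂ • vecMulVec w₂ (star w₂)) *ᵥ w₁) = c₁ := by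
  simp [add_mulVec, smul_mulVec, vecMulVec_mulVec, h.dotProduct_fst, h.dotProduct_snd_fst]

lemma dotProduct_smul_add_smul_mulVec_snd (h : IsOrthonormalPair w₁ w₂) (c₁ c₂ : ℂ) :
    star w₂ ⬝ᵥ ((c₁ • vecMulVec w₁ (star w₁) + c₂ • vecMulVec w₂ (star w₂)) *ᵥ w₂) = c₂ := by
  rw [add_comm, h.symm.dotProduct_smul_add_smul_mulVec_fst]

variable [DecidableEq ι]

lemma isIdempotentElem_one_sub (h : IsOrthonormalPair w₁ w₂) :
    IsIdempotentElem (1 - vecMulVec w₁ (star w₁) - vecMulVec w₂ (star w₂)) := by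
  have h₁ := h.isIdempotentElem_vecMulVec_fst
  have h₂ := h.symm.isIdempotentElem_vecMulVec_fst
  have h₁₂ := h.vecMulVec_mul_vecMulVec_snd
  have h₂₁ := h.symm.vecMulVec_mul_vecMulVec_snd
  simp only [IsIdempotentElem, Matrix.sub_mul, Matrix.mul_sub, Matrix.one_mul, Matrix.mul_one,
    h₁.eq, h₂.eq, h₁₂, h₂₁]
  abel

lemma posSemidef_one_sub (h : IsOrthonormalPair w₁ w₂) :
    (1 - vecMulVec w₁ (star w₁) - vecMulVec w₂ (star w₂)).PosSemidef := by
  have := posSemidef_self_mul_conjTranspose (1 - vecMulVec w₁ (star w₁) - vecMulVec w₂ (star w₂))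
  rwa [(isHermitian_one_sub_vecMulVec_sub_vecMulVec w₁ w₂).eq,
    h.isIdempotentElem_one_sub.eq] at this

lemma re_add_le_re_trace (h : IsOrthonormalPair w₁ w₂) {E : Matrix ι ι ℂ} (hE : E.PosSemidef) :
    (star w₁ ⬝ᵥ (E *ᵥ w₁)).re + (star w₂ ⬝ᵥ (E *ᵥ w₂)).re ≤ E.trace.re := by
  set Q := 1 - vecMulVec w₁ (star w₁) - vecMulVec w₂ (star w₂)
  -- `Q` is an orthogonal projection, hence `Tr (Q E) = Tr (Q E Qᴴ) ≥ 0`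
  have hQE : (Q * E).trace = (Q * E * Qᴴ).trace := by
    rw [(isHermitian_one_sub_vecMulVec_sub_vecMulVec w₁ w₂).eq, trace_mul_comm (Q * E),
      ← Matrix.mul_assoc, h.isIdempotentElem_one_sub.eq]
  have hsplit : E.trace = (vecMulVec w₁ (star w₁) * E).trace
      + (vecMulVec w₂ (star w₂) * E).trace + (Q * E).trace := by
    have hQ : vecMulVec w₁ (star w₁) + vecMulVec w₂ (star w₂) + Q = 1 := by simp only [Q]; abel
    rw [← trace_add, ← trace_add, ← Matrix.add_mul, ← Matrix.add_mul, hQ, Matrix.one_mul]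
  have hQ₀ := (Complex.nonneg_iff.mp (hE.mul_mul_conjTranspose_same Q).trace_nonneg).1
  rw [hsplit, hQE, trace_vecMulVec_star_mul, trace_vecMulVec_star_mul, Complex.add_re,
    Complex.add_re]
  linarith

end IsOrthonormalPair

section Mixture

variable {ι : Type*} [Fintype ι]

lemma exists_isOrthonormalPair_half_add_eq {u v : ι → ℂ} {r : ℝ} (hu : star u ⬝ᵥ u = 1)
    (hv : star v ⬝ᵥ v = 1) (huv : star u ⬝ᵥ v = r) (hr : |r| < 1) :
    ∃ w₁ w₂, IsOrthonormalPair w₁ w₂ ∧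
      (2 : ℂ)⁻¹ • (vecMulVec u (star u) + vecMulVec v (star v))
        = (((1 + r) / 2 : ℝ) : ℂ) • vecMulVec w₁ (star w₁)
          + (((1 - r) / 2 : ℝ) : ℂ) • vecMulVec w₂ (star w₂) := by
  obtain ⟨hr₁, hr₂⟩ := abs_lt.mp hr
  have hvu : star v ⬝ᵥ u = r := by rw [star_dotProduct, huv, Complex.star_def, Complex.conj_ofReal]
  have hplus : star (u + v) ⬝ᵥ (u + v) = ((2 * (1 + r) : ℝ) : ℂ) := by
    simp only [star_add, add_dotProduct, dotProduct_add, hu, hv, huv, hvu]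
    push_cast; ring
  have hminus : star (u - v) ⬝ᵥ (u - v) = ((2 * (1 - r) : ℝ) : ℂ) := by
    simp only [star_sub, sub_dotProduct, dotProduct_sub, hu, hv, huv, hvu]
    push_cast; ring
  have horth : star (u + v) ⬝ᵥ (u - v) = 0 := by
    simp only [star_add, add_dotProduct, dotProduct_sub, hu, hv, huv, hvu]
    ring
  set a := √((2 * (1 + r))⁻¹)
  set b := √((2 * (1 - r))⁻¹)
  have ha : a * a = (2 * (1 + r))⁻¹ := Real.mul_self_sqrt (inv_nonneg.mpr (by linarith))
  have hb : b * b = (2 * (1 - r))⁻¹ := Real.mul_self_sqrt (inv_nonneg.mpr (by linarith))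
  refine ⟨(a : ℂ) • (u + v), (b : ℂ) • (u - v), ⟨?_, ?_, ?_⟩, ?_⟩
  · rw [star_ofReal_smul_dotProduct_ofReal_smul, hplus, ← Complex.ofReal_mul, ha,
      inv_mul_cancel₀ (by linarith), Complex.ofReal_one]
  · rw [star_ofReal_smul_dotProduct_ofReal_smul, hminus, ← Complex.ofReal_mul, hb,
      inv_mul_cancel₀ (by linarith), Complex.ofReal_one]
  · rw [star_ofReal_smul_dotProduct_ofReal_smul, horth, mul_zero]
  · have hpa : (1 + r) / 2 * a ^ 2 = 1 / 4 := by
      rw [sq, ha]; field_simp [show 1 + r ≠ 0 by linarith]; norm_num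
    have hpb : (1 - r) / 2 * b ^ 2 = 1 / 4 := by
      rw [sq, hb]; field_simp [show 1 - r ≠ 0 by linarith]; norm_num
    rw [vecMulVec_star_ofReal_smul, vecMulVec_star_ofReal_smul, smul_smul, smul_smul,
      ← Complex.ofReal_mul, ← Complex.ofReal_mul, hpa, hpb]
    simp only [star_add, star_sub, add_vecMulVec, sub_vecMulVec, vecMulVec_add, vecMulVec_sub]
    push_cast
    module

lemma exists_isOrthonormalPair_half_add_eq_abs {u v : ι → ℂ} {r : ℝ} (hu : star u ⬝ᵥ u = 1)
    (hv : star v ⬝ᵥ v = 1) (huv : star u ⬝ᵥ v = r) (hr : |r| < 1) :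
    ∃ w₁ w₂, IsOrthonormalPair w₁ w₂ ∧
      (2 : ℂ)⁻¹ • (vecMulVec u (star u) + vecMulVec v (star v))
        = (((1 + |r|) / 2 : ℝ) : ℂ) • vecMulVec w₁ (star w₁)
          + (((1 - |r|) / 2 : ℝ) : ℂ) • vecMulVec w₂ (star w₂) := by
  obtain ⟨w₁, w₂, hw, hdec⟩ := exists_isOrthonormalPair_half_add_eq hu hv huv hr
  rcases le_total 0 r with hr₀ | hr₀
  · exact ⟨w₁, w₂, hw, by rw [abs_of_nonneg hr₀, hdec]⟩
  · refine ⟨w₂, w₁, hw.symm, ?_⟩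
    rw [abs_of_nonpos hr₀, hdec, add_comm, sub_neg_eq_add, ← sub_eq_add_neg]

end Mixture

section ErrorSet

variable {n : ℕ} {w₁ w₂ : (Fin n → Fin 2) → ℂ} {a b m ε : ℝ}

lemma posSemidef_smul_projN_add_smul_projN (w₁ w₂ : (Fin n → Fin 2) → ℂ) {c₁ c₂ : ℝ}
    (h₁ : 0 ≤ c₁) (h₂ : 0 ≤ c₂) : ((c₁ : ℂ) • projN w₁ + (c₂ : ℂ) • projN w₂).PosSemidef :=
  ((posSemidef_vecMulVec_self_star w₁).smul (Complex.zero_le_real.mpr h₁)).add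
    ((posSemidef_vecMulVec_self_star w₂).smul (Complex.zero_le_real.mpr h₂))

lemma mem_errSet_of_mem_Icc (hw : IsOrthonormalPair w₁ w₂) {s₁ s₂ : ℝ} (hs₁ : s₁ ∈ Icc (0 : ℝ) 1)
    (hs₂ : s₂ ∈ Icc (0 : ℝ) 1) (hs : 1 - ε ≤ a * s₁ + b * s₂) :
    m * (s₁ + s₂) ∈ errSet n ((a : ℂ) • projN w₁ + (b : ℂ) • projN w₂) ((m : ℂ) • 1) ε := by
  set E := (s₁ : ℂ) • projN w₁ + (s₂ : ℂ) • projN w₂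
  have hE := posSemidef_smul_projN_add_smul_projN w₁ w₂ hs₁.1 hs₂.1
  have hcompl : 1 - E = ((1 - s₁ : ℝ) : ℂ) • projN w₁ + ((1 - s₂ : ℝ) : ℂ) • projN w₂
      + (1 - projN w₁ - projN w₂) := by
    simp only [E]; push_cast; module
  have htrace₀ : (((a : ℂ) • projN w₁ + (b : ℂ) • projN w₂) * E).trace = a * s₁ + b * s₂ := by
    simp only [E, projN, trace_smul_vecMulVec_add_smul_vecMulVec_mul,
      hw.dotProduct_smul_add_smul_mulVec_fst, hw.dotProduct_smul_add_smul_mulVec_snd]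
  have htrace₁ : E.trace = s₁ + s₂ := by
    have := trace_smul_vecMulVec_add_smul_vecMulVec_mul (s₁ : ℂ) s₂ w₁ w₂ 1
    rwa [Matrix.mul_one, one_mulVec, one_mulVec, hw.dotProduct_fst, hw.dotProduct_snd, mul_one,
      mul_one] at this
  refine ⟨E, hE.isHermitian, hE, ?_, ?_, ?_⟩
  · rw [hcompl]
    exact (posSemidef_smul_projN_add_smul_projN w₁ w₂ (sub_nonneg.mpr hs₁.2)
      (sub_nonneg.mpr hs₂.2)).add hw.posSemidef_one_sub
  · rw [htrace₀]
    simpa using hs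
  · rw [Matrix.smul_mul, Matrix.one_mul, trace_smul, htrace₁]
    simp

lemma exists_mem_Icc_le_of_mem_errSet (hw : IsOrthonormalPair w₁ w₂) (hm : 0 ≤ m) {x : ℝ}
    (hx : x ∈ errSet n ((a : ℂ) • projN w₁ + (b : ℂ) • projN w₂) ((m : ℂ) • 1) ε) :
    ∃ t₁ ∈ Icc (0 : ℝ) 1, ∃ t₂ ∈ Icc (0 : ℝ) 1, 1 - ε ≤ a * t₁ + b * t₂ ∧ m * (t₁ + t₂) ≤ x := by
  obtain ⟨E, -, hE, hE₁, hε, rfl⟩ := hx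
  refine ⟨(star w₁ ⬝ᵥ (E *ᵥ w₁)).re,
    ⟨hE.re_dotProduct_nonneg w₁, re_dotProduct_mulVec_le_one hE₁ hw.dotProduct_fst⟩,
    (star w₂ ⬝ᵥ (E *ᵥ w₂)).re,
    ⟨hE.re_dotProduct_nonneg w₂, re_dotProduct_mulVec_le_one hE₁ hw.dotProduct_snd⟩, ?_, ?_⟩
  · rw [projN, projN, trace_smul_vecMulVec_add_smul_vecMulVec_mul] at hε
    simpa using hε
  · rw [Matrix.smul_mul, Matrix.one_mul, trace_smul, smul_eq_mul, Complex.re_ofReal_mul]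
    exact mul_le_mul_of_nonneg_left (hw.re_add_le_re_trace hE) hm

lemma isLeast_errSet (hw : IsOrthonormalPair w₁ w₂) (hm : 0 ≤ m) {s₁ s₂ : ℝ}
    (hs₁ : s₁ ∈ Icc (0 : ℝ) 1) (hs₂ : s₂ ∈ Icc (0 : ℝ) 1) (hs : 1 - ε ≤ a * s₁ + b * s₂)
    (hopt : ∀ t₁ ∈ Icc (0 : ℝ) 1, ∀ t₂ ∈ Icc (0 : ℝ) 1, 1 - ε ≤ a * t₁ + b * t₂ →
      s₁ + s₂ ≤ t₁ + t₂) :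
    IsLeast (errSet n ((a : ℂ) • projN w₁ + (b : ℂ) • projN w₂) ((m : ℂ) • 1) ε)
      (m * (s₁ + s₂)) := by
  refine ⟨mem_errSet_of_mem_Icc hw hs₁ hs₂ hs, fun x hx => ?_⟩
  obtain ⟨t₁, ht₁, t₂, ht₂, ht, hle⟩ := exists_mem_Icc_le_of_mem_errSet hw hm hx
  exact (mul_le_mul_of_nonneg_left (hopt t₁ ht₁ t₂ ht₂ ht) hm).trans hle

lemma isLeast_errSet_of_one_sub_le (hw : IsOrthonormalPair w₁ w₂) (hm : 0 ≤ m) (hba : b ≤ a)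
    (hε : 0 < 1 - ε) (hεa : 1 - ε ≤ a) :
    IsLeast (errSet n ((a : ℂ) • projN w₁ + (b : ℂ) • projN w₂) ((m : ℂ) • 1) ε)
      (m * ((1 - ε) / a)) := by
  have ha : 0 < a := hε.trans_le hεa
  simpa using isLeast_errSet (s₂ := 0) hw hm
    ⟨div_nonneg hε.le ha.le, (div_le_one ha).mpr hεa⟩ ⟨le_rfl, zero_le_one⟩
    (by rw [mul_div_cancel₀ _ ha.ne']; simp)
    fun t₁ ht₁ t₂ ht₂ ht => by
      rw [add_zero, div_le_iff₀ ha]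
      nlinarith [mul_le_mul_of_nonneg_right hba ht₂.1]

lemma isLeast_errSet_of_le_one_sub (hw : IsOrthonormalPair w₁ w₂) (hm : 0 ≤ m) (hb : 0 < b)
    (hba : b ≤ a) (haε : a ≤ 1 - ε) (hεab : 1 - ε ≤ a + b) :
    IsLeast (errSet n ((a : ℂ) • projN w₁ + (b : ℂ) • projN w₂) ((m : ℂ) • 1) ε)
      (m * (1 + (1 - ε - a) / b)) := by
  refine isLeast_errSet hw hm ⟨zero_le_one, le_rfl⟩
    ⟨div_nonneg (by linarith) hb.le, (div_le_one hb).mpr (by linarith)⟩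
    (by rw [mul_div_cancel₀ _ hb.ne']; linarith) fun t₁ ht₁ t₂ ht₂ ht => ?_
  have : (1 - ε - a) / b ≤ t₁ + t₂ - 1 := by
    rw [div_le_iff₀ hb]
    nlinarith [mul_le_mul_of_nonneg_left ht₁.2 (sub_nonneg.mpr hba)]
  linarith

end ErrorSet

section TensorPower

variable {n : ℕ}

def tensorPowVec (n : ℕ) (ψ : Fin 2 → ℂ) : (Fin n → Fin 2) → ℂ := fun x => ∏ i, ψ (x i)

lemma mpow_projv (ψ : Fin 2 → ℂ) : mpow n (projv ψ) = projN (tensorPowVec n ψ) := by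
  ext x y
  simp [mpow, projv, projN, tensorPowVec, vecMulVec_apply, Finset.prod_mul_distrib]

lemma star_tensorPowVec_dotProduct (φ ψ : Fin 2 → ℂ) :
    star (tensorPowVec n φ) ⬝ᵥ tensorPowVec n ψ = (star φ ⬝ᵥ ψ) ^ n := by
  simp only [dotProduct, tensorPowVec, Pi.star_apply, star_prod, ← Finset.prod_mul_distrib]
  exact (Fintype.sum_pow (fun j => star (φ j) * ψ j) n).symm

lemma mpow_mulVec_tensorPowVec (A : Matrix (Fin 2) (Fin 2) ℂ) (ψ : Fin 2 → ℂ) :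
    mpow n A *ᵥ tensorPowVec n ψ = tensorPowVec n (A *ᵥ ψ) := by
  ext x
  simp only [mulVec, dotProduct, mpow, of_apply, tensorPowVec, ← Finset.prod_mul_distrib]
  exact (Fintype.prod_sum fun i j => A (x i) j * ψ j).symm

lemma mpow_diagonal (d : Fin 2 → ℂ) :
    mpow n (diagonal d) = diagonal fun x => ∏ i, d (x i) := by
  ext x y
  by_cases hxy : x = y
  · simp [mpow, hxy]
  · obtain ⟨i, hi⟩ := Function.ne_iff.mp hxy
    simp [mpow, hxy, Finset.prod_eq_zero (Finset.mem_univ i), hi]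

lemma parityOp_eq_mpow : parityOp n = mpow n (diagonal ![1, -1]) := by
  rw [mpow_diagonal, parityOp]
  congr 1
  ext x
  have hσ : ∀ j : Fin 2, (![1, -1] : Fin 2 → ℂ) j = if j = 1 then -1 else 1 := by
    intro j; fin_cases j <;> simp
  simp only [ones, hσ, Finset.prod_ite, Finset.prod_const, one_pow, mul_one]

end TensorPower

section Twirl

variable {n : ℕ}

lemma parityOp_mul_self : parityOp n * parityOp n = 1 := by
  rw [parityOp, diagonal_mul_diagonal, ← diagonal_one]
  congr 1
  ext x
  rw [← pow_add, ← two_mul, pow_mul, neg_one_sq, one_pow]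

lemma conjTranspose_parityOp : (parityOp n)ᴴ = parityOp n := by
  simp [parityOp]

lemma twirl_projN (u : (Fin n → Fin 2) → ℂ) :
    twirl (projN u) = (2 : ℂ)⁻¹ • (projN u + projN (parityOp n *ᵥ u)) := by
  rw [twirl, projN, projN, mul_vecMulVec, vecMulVec_mul, star_mulVec, conjTranspose_parityOp]

lemma twirl_smul_one (c : ℂ) :
    twirl (c • (1 : Matrix (Fin n → Fin 2) (Fin n → Fin 2) ℂ)) = c • 1 := by
  rw [twirl, Matrix.mul_smul, Matrix.smul_mul, Matrix.mul_one, parityOp_mul_self, ← two_smul ℂ,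
    smul_smul, inv_mul_cancel₀ two_ne_zero, one_smul]

lemma twirl_mpow_mmix : twirl (mpow n mmix) = (((2 ^ n)⁻¹ : ℝ) : ℂ) • 1 := by
  rw [mmix, smul_one_eq_diagonal, mpow_diagonal, Finset.prod_const, Finset.card_univ,
    Fintype.card_fin, ← smul_one_eq_diagonal, twirl_smul_one]
  push_cast
  rw [inv_pow]

end Twirl

section Qubit

variable {n : ℕ} {p : ℝ}

lemma star_vecCons_ofReal_dotProduct (a b c d : ℝ) :
    star ![(a : ℂ), (b : ℂ)] ⬝ᵥ ![(c : ℂ), (d : ℂ)] = ((a * c + b * d : ℝ) : ℂ) := by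
  simp [dotProduct, Fin.sum_univ_two, Complex.conj_ofReal]

lemma exists_twirl_mpow_projv_qubitR_eq (hp : p ∈ Icc (0 : ℝ) 1) (hd : |2 * p - 1| ^ n < 1) :
    ∃ w₁ w₂, IsOrthonormalPair w₁ w₂ ∧ twirl (mpow n (projv (qubitR p)))
      = (((1 + |2 * p - 1| ^ n) / 2 : ℝ) : ℂ) • projN w₁
        + (((1 - |2 * p - 1| ^ n) / 2 : ℝ) : ℂ) • projN w₂ := by
  have h₀ : √p * √p = p := Real.mul_self_sqrt hp.1
  have h₁ : √(1 - p) * √(1 - p) = 1 - p := Real.mul_self_sqrt (sub_nonneg.mpr hp.2)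
  have hψ : qubitR p = ![(√p : ℂ), (√(1 - p) : ℂ)] := rfl
  have hφ : diagonal ![1, -1] *ᵥ qubitR p = ![(√p : ℂ), ((-√(1 - p) : ℝ) : ℂ)] := by
    ext j; fin_cases j <;> simp [qubitR]
  have hψψ : star (qubitR p) ⬝ᵥ qubitR p = 1 := by
    rw [hψ, star_vecCons_ofReal_dotProduct, h₀, h₁]; norm_num
  have hφφ : star (diagonal ![1, -1] *ᵥ qubitR p) ⬝ᵥ (diagonal ![1, -1] *ᵥ qubitR p) = 1 := by
    rw [hφ, star_vecCons_ofReal_dotProduct, neg_mul_neg, h₀, h₁]; norm_num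
  have hψφ : star (qubitR p) ⬝ᵥ (diagonal ![1, -1] *ᵥ qubitR p) = ((2 * p - 1 : ℝ) : ℂ) := by
    rw [hφ, hψ, star_vecCons_ofReal_dotProduct, mul_neg, h₀, h₁]; ring_nf
  rw [mpow_projv, twirl_projN, parityOp_eq_mpow, mpow_mulVec_tensorPowVec, ← abs_pow]
  refine exists_isOrthonormalPair_half_add_eq_abs ?_ ?_ ?_ (by rwa [abs_pow])
  · rw [star_tensorPowVec_dotProduct, hψψ, one_pow]
  · rw [star_tensorPowVec_dotProduct, hφφ, one_pow]
  · rw [star_tensorPowVec_dotProduct, hψφ, Complex.ofReal_pow]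

end Qubit

lemma inv_two_pow_mul_div_half {n : ℕ} (hn : 1 ≤ n) (x y : ℝ) :
    (2 ^ n)⁻¹ * (x / (y / 2)) = x / (y * 2 ^ (n - 1)) := by
  obtain ⟨k, rfl⟩ := Nat.exists_eq_add_of_le' hn
  rw [Nat.add_sub_cancel, pow_succ]
  field_simp

/-- For ρ₀ = |ψ⟩⟨ψ| with |ψ⟩ = √p|0⟩+√(1-p)|1⟩, ρ₁ = ½I and
Δ = |2p−1|, the minimal type-II error β_n(ε) under ℤ₂-invariant measurements is:
(a) (1−ε)/((1+Δ^n)2^{n−1}) for ε ∈ [1/2,1) and n ≥ 1;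
(b) (1−Δ^n−ε)/((1−Δ^n)2^{n−1}) for ε ∈ (0,1/2) and n with Δ^n < 1−2ε. -/
theorem typeII_error_formula_pure_vs_mixed (p : ℝ) (hp : p ∈ Set.Ioo (0 : ℝ) 1) :
    (∀ ε ∈ Set.Ico (1 / 2 : ℝ) 1, ∀ n : ℕ, 1 ≤ n →
      sInf (errSet n (twirl (mpow n (projv (qubitR p)))) (twirl (mpow n mmix)) ε)
        = (1 - ε) / ((1 + |2 * p - 1| ^ n) * 2 ^ (n - 1))) ∧
    (∀ ε ∈ Set.Ioo (0 : ℝ) (1 / 2), ∀ n : ℕ, |2 * p - 1| ^ n < 1 - 2 * ε →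
      sInf (errSet n (twirl (mpow n (projv (qubitR p)))) (twirl (mpow n mmix)) ε)
        = (1 - |2 * p - 1| ^ n - ε) / ((1 - |2 * p - 1| ^ n) * 2 ^ (n - 1))) := by
  have hΔ : |2 * p - 1| < 1 := abs_sub_lt_iff.mpr ⟨by linarith [hp.2], by linarith [hp.1]⟩
  refine ⟨fun ε ⟨hε₁, hε₂⟩ n hn => ?_, fun ε ⟨hε₁, hε₂⟩ n hd => ?_⟩
  · have hd : |2 * p - 1| ^ n < 1 := pow_lt_one₀ (abs_nonneg _) hΔ (by omega)
    have hd₀ : 0 ≤ |2 * p - 1| ^ n := by positivity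
    obtain ⟨w₁, w₂, hw, hσ⟩ := exists_twirl_mpow_projv_qubitR_eq (Ioo_subset_Icc_self hp) hd
    rw [hσ, twirl_mpow_mmix, (isLeast_errSet_of_one_sub_le hw (by positivity) (by linarith)
      (by linarith) (by linarith)).csInf_eq, inv_two_pow_mul_div_half hn]
  · have hn : 1 ≤ n := Nat.one_le_iff_ne_zero.mpr fun h => by subst h; norm_num at hd; linarith
    have hd₀ : 0 ≤ |2 * p - 1| ^ n := by positivity
    obtain ⟨w₁, w₂, hw, hσ⟩ :=
      exists_twirl_mpow_projv_qubitR_eq (Ioo_subset_Icc_self hp) (by linarith)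
    rw [hσ, twirl_mpow_mmix, (isLeast_errSet_of_le_one_sub hw (by positivity) (by linarith)
      (by linarith) (by linarith) (by linarith)).csInf_eq, ← inv_two_pow_mul_div_half hn]
    have : 1 - |2 * p - 1| ^ n ≠ 0 := by linarith
    congr 1
    field_simp
    ring
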